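/- With the hypotheses of the previous theorem but assuming only property (H′) for T (for every u ∈ E♯ with Tu ∈ F there exists v ∈ E with Tv = Tu), the map T: E → F has closed range. -/

import Mathlib

/-!
Every `iE v` lies in `E♯₀ ⊆ E♯ₖ`, so by (H′) the range of `TE` is `jF⁻¹(T(E♯ₖ))` for every
step `k`. Closedness in `F` is tested on the Banach steps `F_j`, where the set becomes
`S⁻¹(range A)` with `S = jF ∘ inclF j`, `A = T ∘ inclES 2`, and every point of it is already
reached through the compact link `L : E♯₁ → E♯₂`. Dividing out `ker A`, the second projection
of the fibre product `V = {(g, x) | A g = S x}` is injective with range `S⁻¹(range A)`, while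
its first projection is compact: by the open mapping theorem it lifts through the fibre product
over `E♯₁`, where it factors through `L`. An injective operator `P` with
`‖v‖ ≲ ‖K v‖ + ‖P v‖` for a compact `K` has closed range, since a normalized sequence with
`P vₙ → 0` would have a convergent subsequence with a nonzero limit in `ker P`.
-/

/- A DFS space: `E` is the injective limit of a sequence of Banach spaces `EJ j`
with injective compact linking maps; `E` carries the inductive-limit topology
(expressed by the universal property below) and is the union of the steps. -/
def IsDFSLimit (E : Type) [AddCommGroup E] [Module ℝ E] [TopologicalSpace E]
    (EJ : ℕ → Type) [∀ j, NormedAddCommGroup (EJ j)] [∀ j, NormedSpace ℝ (EJ j)]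
    [∀ j, CompleteSpace (EJ j)]
    (link : ∀ j, EJ j →L[ℝ] EJ (j + 1)) (incl : ∀ j, EJ j →L[ℝ] E) : Prop :=
  (∀ j, Function.Injective (link j)) ∧
  (∀ j, IsCompactOperator (link j)) ∧
  (∀ j, Function.Injective (incl j)) ∧
  (∀ j, ∀ x, incl (j + 1) (link j x) = incl j x) ∧
  (∀ x : E, ∃ j y, incl j y = x) ∧
  (∀ (X : Type) [AddCommGroup X] [Module ℝ X] [TopologicalSpace X],
    ∀ f : E →ₗ[ℝ] X, (∀ j, Continuous (f ∘ incl j)) → Continuous f)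

open Filter Topology Set Function
open scoped NNReal

section Banach

variable {𝕜 : Type*} [RCLike 𝕜]
  {V W X Y G₁ G₂ Z : Type*}
  [NormedAddCommGroup V] [NormedSpace 𝕜 V]
  [NormedAddCommGroup W] [NormedSpace 𝕜 W]
  [NormedAddCommGroup X] [NormedSpace 𝕜 X]
  [NormedAddCommGroup Y] [NormedSpace 𝕜 Y]
  [NormedAddCommGroup G₁] [NormedSpace 𝕜 G₁]
  [NormedAddCommGroup G₂] [NormedSpace 𝕜 G₂]
  [AddCommGroup Z] [Module 𝕜 Z] [TopologicalSpace Z]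

theorem IsCompactOperator.of_comp_surjective {M : Type*} [TopologicalSpace M]
    [CompleteSpace V] [CompleteSpace W] {Φ : W →L[𝕜] V} (hΦ : Surjective Φ) {K : V → M}
    (hK : IsCompactOperator (K ∘ Φ)) : IsCompactOperator K := by
  obtain ⟨C, hC, hpre⟩ := hK
  have hnhds := (Φ.isOpenMap hΦ).image_mem_nhds hpre
  rw [map_zero] at hnhds
  exact ⟨C, hC, mem_of_superset hnhds (image_preimage_subset Φ (K ⁻¹' C))⟩

theorem ContinuousLinearMap.exists_unit_seq_tendsto_zero {P : V →L[𝕜] X}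
    (hP : ¬∃ c : ℝ≥0, ∀ v, ‖v‖ ≤ c * ‖P v‖) :
    ∃ u : ℕ → V, (∀ n, ‖u n‖ = 1) ∧ Tendsto (P ∘ u) atTop (𝓝 0) := by
  push Not at hP
  have hunit : ∀ n : ℕ, ∃ u : V, ‖u‖ = 1 ∧ ‖P u‖ ≤ 1 / (n + 1) := by
    intro n
    obtain ⟨v, hv⟩ := hP (n + 1)
    have hv0 : 0 < ‖v‖ := (mul_nonneg (by positivity) (norm_nonneg _)).trans_lt hv
    refine ⟨(‖v‖⁻¹ : 𝕜) • v, norm_smul_inv_norm (norm_pos_iff.1 hv0), ?_⟩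
    rw [map_smul, norm_smul, norm_inv, RCLike.norm_ofReal, abs_norm, inv_mul_le_iff₀ hv0,
      mul_one_div, le_div_iff₀ (by positivity)]
    push_cast at hv
    linarith
  choose u hu_norm hu_P using hunit
  exact ⟨u, hu_norm, squeeze_zero_norm hu_P tendsto_one_div_add_atTop_nhds_zero_nat⟩

/-- The anti-Lipschitz hypothesis is the a priori estimate `‖v‖ ≲ ‖K v‖ + ‖P v‖`. -/
theorem ContinuousLinearMap.isClosed_range_of_antilipschitz_prod [CompleteSpace V]
    {K : V →L[𝕜] Y} {P : V →L[𝕜] X} (hK : IsCompactOperator K) (hP : Injective P) {c : ℝ≥0}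
    (hKP : AntilipschitzWith c (K.prod P)) : IsClosed (range P) := by
  by_contra hclosed
  obtain ⟨u, hu_norm, hPu⟩ := P.exists_unit_seq_tendsto_zero fun ⟨c', hc'⟩ =>
    hclosed ((P.antilipschitz_of_bound hc').isClosed_range P.uniformContinuous)
  obtain ⟨C, hC, hsub⟩ := hK.image_closedBall_subset_compact 1
  obtain ⟨b, -, ψ, hψ, hKu⟩ :=
    hC.isSeqCompact fun n => hsub ⟨u n, by simp [hu_norm], rfl⟩
  have hΦu : Tendsto (K.prod P ∘ u ∘ ψ) atTop (𝓝 (b, 0)) :=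
    hKu.prodMk_nhds (hPu.comp hψ.tendsto_atTop)
  have hemb := hKP.isClosedEmbedding (K.prod P).uniformContinuous
  obtain ⟨w, hw⟩ : (b, 0) ∈ range (K.prod P) :=
    hemb.isClosed_range.mem_of_tendsto hΦu (Eventually.of_forall fun _ => mem_range_self _)
  have hu : Tendsto (u ∘ ψ) atTop (𝓝 w) := hemb.isEmbedding.tendsto_nhds_iff.2 (hw ▸ hΦu)
  have hw_norm : ‖w‖ = 1 := tendsto_nhds_unique hu.norm (by simp [hu_norm])
  have hw_zero : w = 0 := hP (by simpa using congrArg Prod.snd hw)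
  simp [hw_zero] at hw_norm

def fiberProd (A : G₂ →L[𝕜] Z) (S : X →L[𝕜] Z) : Submodule 𝕜 (G₂ × X) :=
  LinearMap.eqLocus ((A.comp (ContinuousLinearMap.fst 𝕜 G₂ X)) : G₂ × X →ₗ[𝕜] Z)
    (S.comp (ContinuousLinearMap.snd 𝕜 G₂ X))

variable {A : G₂ →L[𝕜] Z} {S : X →L[𝕜] Z}

theorem mem_fiberProd {p : G₂ × X} : p ∈ fiberProd A S ↔ A p.1 = S p.2 := Iff.rfl

theorem isClosed_fiberProd [T2Space Z] : IsClosed (fiberProd A S : Set (G₂ × X)) :=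
  isClosed_eq (A.continuous.comp continuous_fst) (S.continuous.comp continuous_snd)

theorem isClosed_preimage_range_of_injective [CompleteSpace G₁] [CompleteSpace G₂]
    [CompleteSpace X] [T2Space Z] (hA : Injective A) {L : G₁ →L[𝕜] G₂}
    (hL : IsCompactOperator L) (h : S ⁻¹' range A ⊆ S ⁻¹' range (A ∘L L)) :
    IsClosed (S ⁻¹' range A) := by
  let V := fiberProd A S
  let W := fiberProd (A ∘L L) S
  have : CompleteSpace V := isClosed_fiberProd.completeSpace_coe
  have : CompleteSpace W := isClosed_fiberProd.completeSpace_coe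
  let K : V →L[𝕜] G₂ := (ContinuousLinearMap.fst 𝕜 G₂ X).comp V.subtypeL
  let P : V →L[𝕜] X := (ContinuousLinearMap.snd 𝕜 G₂ X).comp V.subtypeL
  let Φ : W →L[𝕜] V := ((L.prodMap (ContinuousLinearMap.id 𝕜 X)).comp W.subtypeL).codRestrict V
    fun w => mem_fiberProd.2 (mem_fiberProd.1 w.2)
  have hΦ : Surjective Φ := by
    rintro ⟨⟨g, x⟩, hv⟩
    obtain ⟨g₁, hg₁⟩ := h ⟨g, hv⟩
    exact ⟨⟨(g₁, x), hg₁⟩, Subtype.ext (Prod.ext (hA (hg₁.trans hv.symm)) rfl)⟩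
  have hK : IsCompactOperator K := IsCompactOperator.of_comp_surjective hΦ
    (hL.comp_clm ((ContinuousLinearMap.fst 𝕜 G₁ X).comp W.subtypeL))
  have hP : Injective P := by
    intro v w hvw
    have hAvw : A (v : G₂ × X).1 = A (w : G₂ × X).1 := by
      rw [mem_fiberProd.1 v.2, mem_fiberProd.1 w.2]
      exact congrArg S hvw
    exact Subtype.ext (Prod.ext (hA hAvw) hvw)
  have hrange : range P = S ⁻¹' range A := by
    ext x
    constructor
    · rintro ⟨v, rfl⟩
      exact ⟨_, v.2⟩
    · rintro ⟨g, hg⟩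
      exact ⟨⟨(g, x), hg⟩, rfl⟩
  rw [← hrange]
  exact ContinuousLinearMap.isClosed_range_of_antilipschitz_prod hK hP (c := 1)
    isometry_subtype_coe.antilipschitz

theorem isClosed_preimage_range_of_subset_range_comp [CompleteSpace G₁] [CompleteSpace G₂]
    [CompleteSpace X] [T2Space Z] {L : G₁ →L[𝕜] G₂}
    (hL : IsCompactOperator L) (h : S ⁻¹' range A ⊆ S ⁻¹' range (A ∘L L)) :
    IsClosed (S ⁻¹' range A) := by
  let N := A.ker
  have : IsClosed (N : Set G₂) := A.isClosed_ker
  let Ā : G₂ ⧸ N →L[𝕜] Z := N.liftQL A le_rfl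
  have hĀ : range Ā = range A := ((Submodule.mkQ_surjective N).range_comp Ā).symm
  have hĀL : Ā ∘L (N.mkQL ∘L L) = A ∘L L := rfl
  have hĀinj : Injective Ā :=
    LinearMap.ker_eq_bot.1 (Submodule.ker_liftQ_eq_bot _ _ _ le_rfl)
  rw [← hĀ] at h ⊢
  exact isClosed_preimage_range_of_injective hĀinj (hL.clm_comp N.mkQL) (by rwa [hĀL])

end Banach

namespace IsDFSLimit

variable {E : Type} [AddCommGroup E] [Module ℝ E] [τ : TopologicalSpace E]
  {EJ : ℕ → Type} [∀ j, NormedAddCommGroup (EJ j)] [∀ j, NormedSpace ℝ (EJ j)]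
  [∀ j, CompleteSpace (EJ j)]
  {link : ∀ j, EJ j →L[ℝ] EJ (j + 1)} {incl : ∀ j, EJ j →L[ℝ] E}

theorem range_incl_mono (h : IsDFSLimit E EJ link incl) : Monotone fun j => range (incl j) :=
  monotone_nat_of_le_succ fun j => by
    rintro _ ⟨x, rfl⟩
    exact ⟨link j x, h.2.2.2.1 j x⟩

/-- Closed sets of a DFS space are detected on the steps: the universal property makes the
topology of `E` finer than the final topology of the inclusions. -/
theorem isClosed_of_isClosed_preimage (h : IsDFSLimit E EJ link incl) {C : Set E}
    (hC : ∀ j, IsClosed (incl j ⁻¹' C)) : IsClosed C := by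
  let t : TopologicalSpace E := ⨆ j, TopologicalSpace.coinduced (incl j) inferInstance
  have hid : Continuous[τ, t] (LinearMap.id : E →ₗ[ℝ] E) :=
    h.2.2.2.2.2 E (LinearMap.id) fun j => continuous_iSup_rng continuous_coinduced_rng
  have hCt : IsClosed[t] C := by
    rw [← isOpen_compl_iff, isOpen_iSup_iff]
    exact fun j => (hC j).isOpen_compl
  exact @IsClosed.preimage E E τ t _ hid C hCt

end IsDFSLimit

theorem stmt13_general
    (E Esharp F Fsharp : Type)
    [AddCommGroup E] [Module ℝ E] [TopologicalSpace E]
    [AddCommGroup Esharp] [Module ℝ Esharp] [TopologicalSpace Esharp]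
    [AddCommGroup F] [Module ℝ F] [TopologicalSpace F]
    [AddCommGroup Fsharp] [Module ℝ Fsharp] [TopologicalSpace Fsharp]
    [T2Space Fsharp]
    (ESJ FJ : ℕ → Type)
    [∀ j, NormedAddCommGroup (ESJ j)] [∀ j, NormedSpace ℝ (ESJ j)]
    [∀ j, CompleteSpace (ESJ j)]
    [∀ j, NormedAddCommGroup (FJ j)] [∀ j, NormedSpace ℝ (FJ j)]
    [∀ j, CompleteSpace (FJ j)]
    (linkES : ∀ j, ESJ j →L[ℝ] ESJ (j + 1)) (inclES : ∀ j, ESJ j →L[ℝ] Esharp)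
    (linkF : ∀ j, FJ j →L[ℝ] FJ (j + 1)) (inclF : ∀ j, FJ j →L[ℝ] F)
    (hES : IsDFSLimit Esharp ESJ linkES inclES)
    (hF : IsDFSLimit F FJ linkF inclF)
    (iE : E →L[ℝ] Esharp)
    (jF : F →L[ℝ] Fsharp) (hjF : Function.Injective jF)
    -- E ↪ E♯₀ continuously:
    (e0 : E →L[ℝ] ESJ 0) (he0 : ∀ x : E, inclES 0 (e0 x) = iE x)
    (T : Esharp →L[ℝ] Fsharp) (TE : E →L[ℝ] F)
    (hcomp : ∀ e : E, jF (TE e) = T (iE e))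
    -- property (H'):
    (hH' : ∀ u : Esharp, T u ∈ Set.range jF → ∃ v : E, T (iE v) = T u) :
    IsClosed (Set.range TE) := by
  have hiE : ∀ v k, iE v ∈ range (inclES k) := fun v k =>
    hES.range_incl_mono (Nat.zero_le k) ⟨e0 v, he0 v⟩
  have hrange : ∀ k, range TE = jF ⁻¹' range (T ∘L inclES k) := by
    intro k
    refine subset_antisymm ?_ fun y ⟨u, hu⟩ => ?_
    · rintro _ ⟨v, rfl⟩
      obtain ⟨u, hu⟩ := hiE v k
      exact ⟨u, by simp [hu, hcomp]⟩
    · obtain ⟨v, hv⟩ := hH' (inclES k u) ⟨y, hu.symm⟩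
      exact ⟨v, hjF (by rw [hcomp, hv]; exact hu)⟩
  refine hF.isClosed_of_isClosed_preimage fun j => ?_
  have hpre : ∀ k, (jF ∘L inclF j) ⁻¹' range (T ∘L inclES k) = inclF j ⁻¹' range TE :=
    fun k => by rw [hrange k]; rfl
  have hlink : (T ∘L inclES 2) ∘L linkES 1 = T ∘L inclES 1 := by
    ext x
    simp [hES.2.2.2.1 1 x]
  rw [← hpre 2]
  exact isClosed_preimage_range_of_subset_range_comp (hES.2.1 1)
    (by rw [hlink, hpre 1, hpre 2])

theorem stmt13
    (E Esharp F Fsharp : Type)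
    [AddCommGroup E] [Module ℝ E] [TopologicalSpace E]
    [AddCommGroup Esharp] [Module ℝ Esharp] [TopologicalSpace Esharp]
    [AddCommGroup F] [Module ℝ F] [TopologicalSpace F]
    [AddCommGroup Fsharp] [Module ℝ Fsharp] [TopologicalSpace Fsharp]
    [T2Space Fsharp]
    (EJ ESJ FJ : ℕ → Type)
    [∀ j, NormedAddCommGroup (EJ j)] [∀ j, NormedSpace ℝ (EJ j)]
    [∀ j, CompleteSpace (EJ j)]
    [∀ j, NormedAddCommGroup (ESJ j)] [∀ j, NormedSpace ℝ (ESJ j)]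
    [∀ j, CompleteSpace (ESJ j)]
    [∀ j, NormedAddCommGroup (FJ j)] [∀ j, NormedSpace ℝ (FJ j)]
    [∀ j, CompleteSpace (FJ j)]
    (linkE : ∀ j, EJ j →L[ℝ] EJ (j + 1)) (inclE : ∀ j, EJ j →L[ℝ] E)
    (linkES : ∀ j, ESJ j →L[ℝ] ESJ (j + 1)) (inclES : ∀ j, ESJ j →L[ℝ] Esharp)
    (linkF : ∀ j, FJ j →L[ℝ] FJ (j + 1)) (inclF : ∀ j, FJ j →L[ℝ] F)
    (hE : IsDFSLimit E EJ linkE inclE)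
    (hES : IsDFSLimit Esharp ESJ linkES inclES)
    (hF : IsDFSLimit F FJ linkF inclF)
    (iE : E →L[ℝ] Esharp) (hiE : Function.Injective iE)
    (jF : F →L[ℝ] Fsharp) (hjF : Function.Injective jF)
    -- E ↪ E♯₀ continuously:
    (e0 : E →L[ℝ] ESJ 0) (he0 : ∀ x : E, inclES 0 (e0 x) = iE x)
    (T : Esharp →L[ℝ] Fsharp) (TE : E →L[ℝ] F)
    (hcomp : ∀ e : E, jF (TE e) = T (iE e))
    -- property (H'):
    (hH' : ∀ u : Esharp, T u ∈ Set.range jF → ∃ v : E, T (iE v) = T u) :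
    IsClosed (Set.range TE) :=
  stmt13_general E Esharp F Fsharp ESJ FJ linkES inclES linkF inclF hES hF iE jF hjF e0 he0 T TE
    hcomp hH'
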